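/- arXiv:2205.11793 — 8 statements merged into one kernel-verified Lean document; each statement's English description precedes it below -/
import Mathlib

section
/- For closed bounded intervals A, B, C in I(ℝ), if A ⪯ B −_gH C then B ⊀ A + C. -/
/-- A closed bounded interval `[lo, hi]` in `ℝ`. -/
structure IntervalR where
  lo : ℝ
  hi : ℝ
  lo_le_hi : lo ≤ hi

namespace IntervalR

/-- Minkowski sum of intervals. -/
def add (A B : IntervalR) : IntervalR :=
  ⟨A.lo + B.lo, A.hi + B.hi, add_le_add A.lo_le_hi B.lo_le_hi⟩

/-- Scalar multiple of an interval. -/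
noncomputable def smul (l : ℝ) (A : IntervalR) : IntervalR :=
  if h : 0 ≤ l then ⟨l * A.lo, l * A.hi, mul_le_mul_of_nonneg_left A.lo_le_hi h⟩
  else ⟨l * A.hi, l * A.lo, by nlinarith [A.lo_le_hi, lt_of_not_ge h]⟩

/-- Generalized Hukuhara difference. -/
def gH (A B : IntervalR) : IntervalR :=
  ⟨min (A.lo - B.lo) (A.hi - B.hi), max (A.lo - B.lo) (A.hi - B.hi), min_le_max⟩

/-- Hausdorff metric on intervals. -/
def dH (A B : IntervalR) : ℝ := max |A.lo - B.lo| |A.hi - B.hi|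

/-- The partial order `A ⪯ B`. -/
def le (A B : IntervalR) : Prop := A.lo ≤ B.lo ∧ A.hi ≤ B.hi

/-- The strict order `A ≺ B`. -/
def lt (A B : IntervalR) : Prop := le A B ∧ A ≠ B

/-- The degenerate interval `[0,0]`. -/
def zero : IntervalR := ⟨0, 0, le_refl 0⟩

end IntervalR

theorem le_gH_imp_not_lt_add (A B C : IntervalR)
    (h : IntervalR.le A (IntervalR.gH B C)) :
    ¬ IntervalR.lt B (IntervalR.add A C) := by
  rintro ⟨⟨hlo, hhi⟩, hne⟩
  obtain ⟨h1, h2⟩ := h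
  simp only [IntervalR.gH, IntervalR.add] at *
  have hmin1 : A.lo ≤ B.lo - C.lo := le_trans h1 (min_le_left _ _)
  have hmin2 : A.lo ≤ B.hi - C.hi := le_trans h1 (min_le_right _ _)
  have hloeq : B.lo = A.lo + C.lo := le_antisymm hlo (by linarith)
  have hhieq : B.hi = A.hi + C.hi := by
    rcases le_max_iff.mp h2 with h3 | h3
    · have hA : A.hi = A.lo := le_antisymm (by linarith) A.lo_le_hi
      refine le_antisymm hhi ?_
      rw [hA]; linarith
    · exact le_antisymm hhi (by linarith)
  exact hne (by cases B; cases A; cases C; simp_all)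
end

section
/- For closed bounded intervals A, B, C, D in I(ℝ), if 0 ⪯ (A −_gH B) + (C −_gH D) then 0 ⪯ (A + C) −_gH (B + D), where 0 denotes the degenerate interval [0,0]. -/
theorem zero_le_add_gH (A B C D : IntervalR)
    (h : IntervalR.le IntervalR.zero
      (IntervalR.add (IntervalR.gH A B) (IntervalR.gH C D))) :
    IntervalR.le IntervalR.zero
      (IntervalR.gH (IntervalR.add A C) (IntervalR.add B D)) := by
  obtain ⟨h1, h2⟩ := h
  simp only [IntervalR.zero, IntervalR.add, IntervalR.gH, IntervalR.le, le_min_iff, le_max_iff] at *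
  have m1 := min_le_left (A.lo - B.lo) (A.hi - B.hi)
  have m2 := min_le_right (A.lo - B.lo) (A.hi - B.hi)
  have m3 := min_le_left (C.lo - D.lo) (C.hi - D.hi)
  have m4 := min_le_right (C.lo - D.lo) (C.hi - D.hi)
  refine ⟨⟨by linarith, by linarith⟩, ?_⟩
  rcases max_cases (A.lo - B.lo) (A.hi - B.hi) with ⟨e1, _⟩ | ⟨e1, _⟩ <;>
    rcases max_cases (C.lo - D.lo) (C.hi - D.hi) with ⟨e2, _⟩ | ⟨e2, _⟩ <;>
      rw [e1, e2] at h2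
  · left; linarith
  · right; linarith
  · right; linarith
  · right; linarith
end

section
/- Let U ⊆ ℝⁿ be a convex set with nonempty interior and f: U → I(ℝ) a convex interval valued function. Then f is gH-continuous at every point x₀ of the interior of U, i.e., lim_{‖v‖→0} (f(x₀ + v) −_gH f(x₀)) = [0,0], equivalently d_H(f(x), f(x₀)) → 0 as x → x₀. -/
/-- `f` is a convex interval valued function on the convex set `U`. -/
def ConvexIVF {n : ℕ} (U : Set (EuclideanSpace ℝ (Fin n)))
    (f : EuclideanSpace ℝ (Fin n) → IntervalR) : Prop :=
  ∀ x ∈ U, ∀ y ∈ U, ∀ t : ℝ, t ∈ Set.Icc (0 : ℝ) 1 →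
    IntervalR.le (f (t • x + (1 - t) • y))
      (IntervalR.add (IntervalR.smul t (f x)) (IntervalR.smul (1 - t) (f y)))

theorem convexIVF_gH_continuous_on_interior {n : ℕ} (U : Set (EuclideanSpace ℝ (Fin n)))
    (hU : Convex ℝ U) (hne : (interior U).Nonempty)
    (f : EuclideanSpace ℝ (Fin n) → IntervalR) (hf : ConvexIVF U f) :
    ∀ x₀ ∈ interior U, ∀ ε > (0 : ℝ), ∃ δ > (0 : ℝ),
      ∀ v : EuclideanSpace ℝ (Fin n), ‖v‖ < δ →
        IntervalR.dH (f (x₀ + v)) (f x₀) < ε := by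
  intro x₀ hx₀ ε hε
  set g : EuclideanSpace ℝ (Fin n) → ℝ := fun x => (f x).lo with hgdef
  set h : EuclideanSpace ℝ (Fin n) → ℝ := fun x => (f x).hi with hhdef
  have key : ∀ x ∈ U, ∀ y ∈ U, ∀ a b : ℝ, 0 ≤ a → 0 ≤ b → a + b = 1 →
      g (a • x + b • y) ≤ a * g x + b * g y ∧
      h (a • x + b • y) ≤ a * h x + b * h y := by
    intro x hx y hy a b ha hb hab
    have hb' : b = 1 - a := by linarith
    subst hb'
    have H := hf x hx y hy a ⟨ha, by linarith⟩
    have h1a : (0 : ℝ) ≤ 1 - a := by linarith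
    obtain ⟨H1, H2⟩ := H
    simp only [IntervalR.add, IntervalR.smul, dif_pos ha, dif_pos h1a] at H1 H2
    exact ⟨H1, H2⟩
  have hg : ConvexOn ℝ U g := ⟨hU, fun x hx y hy a b ha hb hab =>
    (key x hx y hy a b ha hb hab).1⟩
  have hh : ConvexOn ℝ U h := ⟨hU, fun x hx y hy a b ha hb hab =>
    (key x hx y hy a b ha hb hab).2⟩
  have hgc : ContinuousAt g x₀ :=
    (((hg.subset interior_subset hU.interior).continuousOn isOpen_interior).continuousAt (isOpen_interior.mem_nhds hx₀))
  have hhc : ContinuousAt h x₀ :=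
    (((hh.subset interior_subset hU.interior).continuousOn isOpen_interior).continuousAt (isOpen_interior.mem_nhds hx₀))
  rw [Metric.continuousAt_iff] at hgc hhc
  obtain ⟨δ₁, hδ₁, hg1⟩ := hgc ε hε
  obtain ⟨δ₂, hδ₂, hh1⟩ := hhc ε hε
  refine ⟨min δ₁ δ₂, lt_min hδ₁ hδ₂, fun v hv => ?_⟩
  have hdist : dist (x₀ + v) x₀ = ‖v‖ := by
    rw [dist_eq_norm, add_sub_cancel_left]
  have hvg : dist (x₀ + v) x₀ < δ₁ := by
    rw [hdist]; exact lt_of_lt_of_le hv (min_le_left _ _)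
  have hvh : dist (x₀ + v) x₀ < δ₂ := by
    rw [hdist]; exact lt_of_lt_of_le hv (min_le_right _ _)
  have A := hg1 hvg
  have B := hh1 hvh
  rw [Real.dist_eq] at A B
  exact max_lt A B
end

section
/- Let U ⊆ ℝⁿ be a nonempty convex set and f: U → I(ℝ) a convex interval valued function. Then for every x₀ ∈ U and v ∈ ℝⁿ, the function φ(t) = (1/t)(f(x₀ + tv) −_gH f(x₀)), defined for t > 0 with x₀ + tv ∈ U, is monotonically increasing with respect to ⪯: if 0 < t ≤ s and x₀ + sv ∈ U, then φ(t) ⪯ φ(s). -/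
/-!
With `λ = t / s ∈ [0, 1]` the point `x₀ + t • v` is `λ • (x₀ + s • v) + (1 - λ) • x₀`, so convexity
of `f` bounds each endpoint difference of `f (x₀ + t • v)` and `f x₀` by `λ` times the corresponding
endpoint difference of `f (x₀ + s • v)` and `f x₀`. Dividing by `t` orders the endpoint difference
quotients, and the gH-difference takes their `min` and `max`, both monotone.
-/

namespace IntervalR

theorem smul_of_nonneg {l : ℝ} (hl : 0 ≤ l) (A : IntervalR) :
    smul l A = ⟨l * A.lo, l * A.hi, mul_le_mul_of_nonneg_left A.lo_le_hi hl⟩ :=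
  dif_pos hl

theorem smul_gH_le_smul_gH {p q : ℝ} (hp : 0 ≤ p) (hq : 0 ≤ q) {A B C D : IntervalR}
    (hlo : p * (A.lo - B.lo) ≤ q * (C.lo - D.lo))
    (hhi : p * (A.hi - B.hi) ≤ q * (C.hi - D.hi)) :
    le (smul p (gH A B)) (smul q (gH C D)) := by
  simp only [smul_of_nonneg hp, smul_of_nonneg hq, gH, le, mul_min_of_nonneg _ _ hp,
    mul_min_of_nonneg _ _ hq, mul_max_of_nonneg _ _ hp, mul_max_of_nonneg _ _ hq]
  exact ⟨min_le_min hlo hhi, max_le_max hlo hhi⟩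

end IntervalR

theorem ConvexIVF.sub_le_mul_sub {n : ℕ} {U : Set (EuclideanSpace ℝ (Fin n))}
    {f : EuclideanSpace ℝ (Fin n) → IntervalR} (hf : ConvexIVF U f)
    {x y : EuclideanSpace ℝ (Fin n)} (hx : x ∈ U) (hy : y ∈ U) {l : ℝ}
    (hl : l ∈ Set.Icc (0 : ℝ) 1) :
    (f (l • x + (1 - l) • y)).lo - (f y).lo ≤ l * ((f x).lo - (f y).lo) ∧
      (f (l • x + (1 - l) • y)).hi - (f y).hi ≤ l * ((f x).hi - (f y).hi) := by
  have h := hf x hx y hy l hl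
  rw [IntervalR.le, IntervalR.add, IntervalR.smul_of_nonneg hl.1,
    IntervalR.smul_of_nonneg (sub_nonneg.mpr hl.2)] at h
  constructor <;> linarith [h.1, h.2]

theorem one_div_mul_le_one_div_mul_of_le_div_mul {t s a b : ℝ} (ht : 0 < t)
    (h : a ≤ t / s * b) : 1 / t * a ≤ 1 / s * b :=
  calc 1 / t * a ≤ 1 / t * (t / s * b) := mul_le_mul_of_nonneg_left h (by positivity)
    _ = 1 / s * b := by field_simp

theorem diff_quotient_monotone_general {n : ℕ} (U : Set (EuclideanSpace ℝ (Fin n)))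
    (f : EuclideanSpace ℝ (Fin n) → IntervalR) (hf : ConvexIVF U f)
    (x₀ : EuclideanSpace ℝ (Fin n)) (hx₀ : x₀ ∈ U) (v : EuclideanSpace ℝ (Fin n))
    (t s : ℝ) (ht : 0 < t) (hts : t ≤ s) (hs : x₀ + s • v ∈ U) :
    IntervalR.le
      (IntervalR.smul (1 / t) (IntervalR.gH (f (x₀ + t • v)) (f x₀)))
      (IntervalR.smul (1 / s) (IntervalR.gH (f (x₀ + s • v)) (f x₀))) := by
  have hs₀ : 0 < s := ht.trans_le hts
  have hratio : t / s ∈ Set.Icc (0 : ℝ) 1 := ⟨by positivity, (div_le_one hs₀).mpr hts⟩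
  have hpoint : (t / s) • (x₀ + s • v) + (1 - t / s) • x₀ = x₀ + t • v := by
    rw [smul_add, smul_smul, div_mul_cancel₀ t hs₀.ne', sub_smul, one_smul]
    abel
  obtain ⟨hlo, hhi⟩ := hpoint ▸ hf.sub_le_mul_sub hs hx₀ hratio
  exact IntervalR.smul_gH_le_smul_gH (by positivity) (by positivity)
    (one_div_mul_le_one_div_mul_of_le_div_mul ht hlo)
    (one_div_mul_le_one_div_mul_of_le_div_mul ht hhi)

theorem diff_quotient_monotone {n : ℕ} (U : Set (EuclideanSpace ℝ (Fin n)))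
    (hne : U.Nonempty) (hU : Convex ℝ U)
    (f : EuclideanSpace ℝ (Fin n) → IntervalR) (hf : ConvexIVF U f)
    (x₀ : EuclideanSpace ℝ (Fin n)) (hx₀ : x₀ ∈ U) (v : EuclideanSpace ℝ (Fin n))
    (t s : ℝ) (ht : 0 < t) (hts : t ≤ s) (hs : x₀ + s • v ∈ U) :
    IntervalR.le
      (IntervalR.smul (1 / t) (IntervalR.gH (f (x₀ + t • v)) (f x₀)))
      (IntervalR.smul (1 / s) (IntervalR.gH (f (x₀ + s • v)) (f x₀))) :=
  diff_quotient_monotone_general U f hf x₀ hx₀ v t s ht hts hs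
end

section
/- Let U ⊆ ℝⁿ be a nonempty open convex set and f: U → I(ℝ) a convex interval valued function. Then for every x₀ ∈ U and v ∈ ℝⁿ there exists t₀ > 0 and an interval B ∈ I(ℝ) such that B ⪯ (1/t)(f(x₀ + tv) −_gH f(x₀)) for all t ∈ (0, t₀]; i.e., the difference quotient is bounded below near 0. -/
theorem diff_quotient_bounded_below {n : ℕ} (U : Set (EuclideanSpace ℝ (Fin n)))
    (hne : U.Nonempty) (hU : Convex ℝ U) (hUo : IsOpen U)
    (f : EuclideanSpace ℝ (Fin n) → IntervalR) (hf : ConvexIVF U f)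
    (x₀ : EuclideanSpace ℝ (Fin n)) (hx₀ : x₀ ∈ U) (v : EuclideanSpace ℝ (Fin n)) :
    ∃ t₀ > (0 : ℝ), ∃ B : IntervalR, ∀ t : ℝ, 0 < t → t ≤ t₀ →
      IntervalR.le B (IntervalR.smul (1 / t) (IntervalR.gH (f (x₀ + t • v)) (f x₀))) := by
  obtain ⟨ε, hε, hball⟩ := Metric.isOpen_iff.mp hUo x₀ hx₀
  set t₁ : ℝ := ε / (2 * (‖v‖ + 1)) with ht₁def
  have hnv : (0:ℝ) < ‖v‖ + 1 := by positivity
  have ht₁ : 0 < t₁ := by positivity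
  have hkey : t₁ * (‖v‖ + 1) < ε := by
    rw [ht₁def, div_mul_eq_mul_div, div_lt_iff₀ (by positivity)]
    nlinarith
  have hmem : ∀ s : ℝ, |s| ≤ t₁ → x₀ + s • v ∈ U := by
    intro s hs
    apply hball
    simp only [Metric.mem_ball, dist_eq_norm, add_sub_cancel_left, norm_smul,
      Real.norm_eq_abs]
    calc |s| * ‖v‖ ≤ t₁ * (‖v‖ + 1) := by
          apply mul_le_mul hs (by linarith) (norm_nonneg v) (le_of_lt ht₁)
      _ < ε := hkey
  set C := f (x₀ - t₁ • v) with hC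
  set X := f x₀ with hX
  refine ⟨t₁, ht₁, ⟨min ((X.lo - C.lo)/t₁) ((X.hi - C.hi)/t₁),
    max ((X.lo - C.lo)/t₁) ((X.hi - C.hi)/t₁), min_le_max⟩, ?_⟩
  intro t ht htle
  have hxF : x₀ + t • v ∈ U := hmem t (by rw [abs_of_pos ht]; exact htle)
  have hxC : x₀ - t₁ • v ∈ U := by
    have := hmem (-t₁) (by rw [abs_neg, abs_of_pos ht₁])
    simpa [neg_smul, sub_eq_add_neg] using this
  set l : ℝ := t₁ / (t + t₁) with hl
  have htt₁ : 0 < t + t₁ := by linarith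
  have hl0 : (0:ℝ) ≤ l := by positivity
  have hl1 : l ≤ 1 := by
    rw [hl, div_le_one htt₁]; linarith
  have h1l : (0:ℝ) ≤ 1 - l := by linarith
  have hcomb : l • (x₀ + t • v) + (1 - l) • (x₀ - t₁ • v) = x₀ := by
    have hlt : l * t - (1 - l) * t₁ = 0 := by
      rw [hl]; field_simp; try ring
    have : l • (x₀ + t • v) + (1 - l) • (x₀ - t₁ • v)
        = (l + (1 - l)) • x₀ + (l * t - (1 - l) * t₁) • v := by module
    rw [this, hlt]; simp
  have hconv := hf _ hxF _ hxC l ⟨hl0, hl1⟩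
  rw [hcomb] at hconv
  set F := f (x₀ + t • v) with hF
  simp only [IntervalR.le, IntervalR.add, IntervalR.smul, dif_pos hl0, dif_pos h1l,
    ← hX, ← hC] at hconv
  obtain ⟨hlo, hhi⟩ := hconv
  have hlo2 : (t + t₁) * X.lo ≤ t₁ * F.lo + t * C.lo := by
    calc (t + t₁) * X.lo ≤ (t + t₁) * (l * F.lo + (1 - l) * C.lo) :=
          mul_le_mul_of_nonneg_left hlo htt₁.le
      _ = t₁ * F.lo + t * C.lo := by rw [hl]; field_simp; try ring
  have hhi2 : (t + t₁) * X.hi ≤ t₁ * F.hi + t * C.hi := by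
    calc (t + t₁) * X.hi ≤ (t + t₁) * (l * F.hi + (1 - l) * C.hi) :=
          mul_le_mul_of_nonneg_left hhi htt₁.le
      _ = t₁ * F.hi + t * C.hi := by rw [hl]; field_simp; try ring
  have hlo' : (X.lo - C.lo) / t₁ ≤ 1 / t * (F.lo - X.lo) := by
    rw [div_le_iff₀ ht₁]
    have : 1 / t * (F.lo - X.lo) * t₁ = (F.lo - X.lo) * t₁ / t := by ring
    rw [this, le_div_iff₀ ht]
    nlinarith
  have hhi' : (X.hi - C.hi) / t₁ ≤ 1 / t * (F.hi - X.hi) := by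
    rw [div_le_iff₀ ht₁]
    have : 1 / t * (F.hi - X.hi) * t₁ = (F.hi - X.hi) * t₁ / t := by ring
    rw [this, le_div_iff₀ ht]
    nlinarith
  have ht' : (0:ℝ) ≤ 1 / t := by positivity
  simp only [IntervalR.le, IntervalR.smul, IntervalR.gH, dif_pos ht']
  constructor
  · rcases min_cases (F.lo - X.lo) (F.hi - X.hi) with ⟨he, _⟩ | ⟨he, _⟩ <;> rw [he]
    · exact le_trans (min_le_left _ _) hlo'
    · exact le_trans (min_le_right _ _) hhi'
  · refine max_le ?_ ?_
    · exact le_trans hlo' (mul_le_mul_of_nonneg_left (le_max_left _ _) ht')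
    · exact le_trans hhi' (mul_le_mul_of_nonneg_left (le_max_right _ _) ht')
end

section
/- Let U ⊆ ℝⁿ be a nonempty open convex set and f: U → I(ℝ) a convex interval valued function. Then at every x₀ ∈ U the gH-directional derivative f'(x₀, v) = lim_{t→0⁺} (1/t)(f(x₀ + tv) −_gH f(x₀)) exists (as a limit in the Hausdorff metric) for every direction v ∈ ℝⁿ. -/
/-- `f` has gH-directional derivative `L` at `x` in the direction `v`, i.e.
`(1/t) * (f(x + t v) −_gH f(x)) → L` in the Hausdorff metric as `t → 0⁺`. -/
def HasGHDirDeriv {n : ℕ} (f : EuclideanSpace ℝ (Fin n) → IntervalR)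
    (x v : EuclideanSpace ℝ (Fin n)) (L : IntervalR) : Prop :=
  Filter.Tendsto
    (fun t : ℝ => IntervalR.dH (IntervalR.smul (1 / t) (IntervalR.gH (f (x + t • v)) (f x))) L)
    (nhdsWithin 0 (Set.Ioi 0)) (nhds 0)

/-- A real function `g` has directional derivative `d` at `x` in the direction `v`. -/
def HasDirDeriv {n : ℕ} (g : EuclideanSpace ℝ (Fin n) → ℝ)
    (x v : EuclideanSpace ℝ (Fin n)) (d : ℝ) : Prop :=
  Filter.Tendsto (fun t : ℝ => (g (x + t • v) - g x) / t) (nhdsWithin 0 (Set.Ioi 0)) (nhds d)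

open Filter Topology Set

theorem ConvexOn.exists_tendsto_dirQuotient {E : Type*} [AddCommGroup E] [Module ℝ E]
    [TopologicalSpace E] [ContinuousAdd E] [ContinuousSMul ℝ E] {U : Set E} {g : E → ℝ}
    (hg : ConvexOn ℝ U g) (hU : IsOpen U) {x : E} (hx : x ∈ U) (v : E) :
    ∃ d, Tendsto (fun t : ℝ => (g (x + t • v) - g x) / t) (𝓝[>] 0) (𝓝 d) := by
  set φ : ℝ →ᵃ[ℝ] E := AffineMap.lineMap x (x + v)
  have hφ : ⇑φ = fun t => x + t • v := funext fun t => by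
    simp [φ, AffineMap.lineMap_apply, add_comm]
  have h0 : (0 : ℝ) ∈ interior (φ ⁻¹' U) := by
    rw [(hU.preimage (by rw [hφ]; fun_prop)).interior_eq]
    simpa [hφ] using hx
  have hderiv := (hg.comp_affineMap φ).hasDerivWithinAt_sInf_slope_of_mem_interior h0
  rw [hasDerivWithinAt_iff_tendsto_slope, sdiff_singleton_eq_self self_notMem_Ioi] at hderiv
  exact ⟨_, hderiv.congr fun t => by simp [slope_def_field, hφ]⟩

namespace IntervalR

def ofMinMax (a b : ℝ) : IntervalR := ⟨min a b, max a b, min_le_max⟩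

theorem gH_eq_ofMinMax (A B : IntervalR) : gH A B = ofMinMax (A.lo - B.lo) (A.hi - B.hi) := rfl

theorem smul_lo_of_nonneg {l : ℝ} (hl : 0 ≤ l) (A : IntervalR) : (smul l A).lo = l * A.lo := by
  simp [smul, hl]

theorem smul_hi_of_nonneg {l : ℝ} (hl : 0 ≤ l) (A : IntervalR) : (smul l A).hi = l * A.hi := by
  simp [smul, hl]

theorem smul_ofMinMax_of_nonneg {l : ℝ} (hl : 0 ≤ l) (a b : ℝ) :
    smul l (ofMinMax a b) = ofMinMax (l * a) (l * b) := by
  simp only [smul, ofMinMax, dif_pos hl, mul_min_of_nonneg _ _ hl, mul_max_of_nonneg _ _ hl]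

theorem dH_ofMinMax_le (a b c d : ℝ) :
    dH (ofMinMax a b) (ofMinMax c d) ≤ max |a - c| |b - d| :=
  max_le (abs_min_sub_min_le_max a b c d) (abs_max_sub_max_le_max a b c d)

end IntervalR

section ConvexIVF

variable {n : ℕ} {U : Set (EuclideanSpace ℝ (Fin n))} {f : EuclideanSpace ℝ (Fin n) → IntervalR}

theorem ConvexIVF.convexOn_lo (hU : Convex ℝ U) (hf : ConvexIVF U f) :
    ConvexOn ℝ U fun x => (f x).lo := by
  refine ⟨hU, fun x hx y hy a b ha hb hab => ?_⟩
  obtain rfl : a = 1 - b := by linarith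
  have h := (hf x hx y hy (1 - b) ⟨ha, by linarith⟩).1
  simpa only [sub_sub_cancel, smul_eq_mul, IntervalR.add, IntervalR.smul_lo_of_nonneg ha,
    IntervalR.smul_lo_of_nonneg hb] using h

theorem ConvexIVF.convexOn_hi (hU : Convex ℝ U) (hf : ConvexIVF U f) :
    ConvexOn ℝ U fun x => (f x).hi := by
  refine ⟨hU, fun x hx y hy a b ha hb hab => ?_⟩
  obtain rfl : a = 1 - b := by linarith
  have h := (hf x hx y hy (1 - b) ⟨ha, by linarith⟩).2
  simpa only [sub_sub_cancel, smul_eq_mul, IntervalR.add, IntervalR.smul_hi_of_nonneg ha,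
    IntervalR.smul_hi_of_nonneg hb] using h

end ConvexIVF

theorem hasGHDirDeriv_of_hasDirDeriv_lo_hi {n : ℕ} {f : EuclideanSpace ℝ (Fin n) → IntervalR}
    {x v : EuclideanSpace ℝ (Fin n)} {a b : ℝ} (ha : HasDirDeriv (fun y => (f y).lo) x v a)
    (hb : HasDirDeriv (fun y => (f y).hi) x v b) :
    HasGHDirDeriv f x v (IntervalR.ofMinMax a b) := by
  have hdist : Tendsto (fun t => max |((f (x + t • v)).lo - (f x).lo) / t - a|
      |((f (x + t • v)).hi - (f x).hi) / t - b|) (𝓝[>] 0) (𝓝 0) := by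
    simpa using ((ha.sub_const a).abs).max (hb.sub_const b).abs
  refine squeeze_zero' (Eventually.of_forall fun t => ?_) ?_ hdist
  · exact (abs_nonneg _).trans (le_max_left _ _)
  · filter_upwards [self_mem_nhdsWithin] with t (ht : 0 < t)
    rw [IntervalR.gH_eq_ofMinMax, IntervalR.smul_ofMinMax_of_nonneg (one_div_nonneg.2 ht.le),
      one_div_mul_eq_div, one_div_mul_eq_div]
    exact IntervalR.dH_ofMinMax_le _ _ _ _

theorem convexIVF_gH_dirDeriv_exists_general {n : ℕ} (U : Set (EuclideanSpace ℝ (Fin n)))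
    (hU : Convex ℝ U) (hUo : IsOpen U)
    (f : EuclideanSpace ℝ (Fin n) → IntervalR) (hf : ConvexIVF U f) :
    ∀ x₀ ∈ U, ∀ v : EuclideanSpace ℝ (Fin n), ∃ L : IntervalR, HasGHDirDeriv f x₀ v L := by
  intro x₀ hx₀ v
  obtain ⟨a, ha⟩ := (hf.convexOn_lo hU).exists_tendsto_dirQuotient hUo hx₀ v
  obtain ⟨b, hb⟩ := (hf.convexOn_hi hU).exists_tendsto_dirQuotient hUo hx₀ v
  exact ⟨_, hasGHDirDeriv_of_hasDirDeriv_lo_hi ha hb⟩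

theorem convexIVF_gH_dirDeriv_exists {n : ℕ} (U : Set (EuclideanSpace ℝ (Fin n)))
    (hne : U.Nonempty) (hU : Convex ℝ U) (hUo : IsOpen U)
    (f : EuclideanSpace ℝ (Fin n) → IntervalR) (hf : ConvexIVF U f) :
    ∀ x₀ ∈ U, ∀ v : EuclideanSpace ℝ (Fin n), ∃ L : IntervalR, HasGHDirDeriv f x₀ v L :=
  convexIVF_gH_dirDeriv_exists_general U hU hUo f hf
end

section
/- Let U ⊆ ℝⁿ be a nonempty open convex set and f: U → I(ℝ) a convex interval valued function that is gH-directionally differentiable on U. Then f(y) ⊀ f'(x, y − x) + f(x) for all x, y ∈ U, where f'(x, v) = lim_{t→0⁺} (1/t)(f(x + tv) −_gH f(x)) is the gH-directional derivative. -/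
open Filter Topology Set

lemma IntervalR.ext' {A B : IntervalR} (h1 : A.lo = B.lo) (h2 : A.hi = B.hi) : A = B := by
  cases A; cases B; simp_all

private lemma aux_quot (l s t Fs Ft Fx : ℝ) (hs : 0 < s) (ht : 0 < t) (hlt : l * t = s)
    (h : Fs ≤ l * Ft + (1 - l) * Fx) : (Fs - Fx) / s ≤ (Ft - Fx) / t := by
  rw [div_le_div_iff₀ hs ht]
  have h2 := mul_le_mul_of_nonneg_right h ht.le
  have e : (l * Ft + (1 - l) * Fx) * t = s * Ft + (t - s) * Fx := by
    rw [← hlt]; ring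
  rw [e] at h2
  linarith


theorem convexIVF_not_lt_dirDeriv_add {n : ℕ} (U : Set (EuclideanSpace ℝ (Fin n)))
    (hne : U.Nonempty) (hU : Convex ℝ U) (hUo : IsOpen U)
    (f : EuclideanSpace ℝ (Fin n) → IntervalR) (hf : ConvexIVF U f)
    (f' : EuclideanSpace ℝ (Fin n) → EuclideanSpace ℝ (Fin n) → IntervalR)
    (hdiff : ∀ x ∈ U, ∀ v : EuclideanSpace ℝ (Fin n), HasGHDirDeriv f x v (f' x v)) :
    ∀ x ∈ U, ∀ y ∈ U,
      ¬ IntervalR.lt (f y) (IntervalR.add (f' x (y - x)) (f x)) := by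
  intro x hx y hy hlt
  obtain ⟨⟨hlo, hhi⟩, hneq⟩ := hlt
  set v := y - x with hv
  set L := f' x v with hLdef
  have hL : HasGHDirDeriv f x v L := hdiff x hx v
  have hlo' : (f y).lo ≤ L.lo + (f x).lo := hlo
  have hhi' : (f y).hi ≤ L.hi + (f x).hi := hhi
  -- quotient functions
  set p : ℝ → ℝ := fun s => ((f (x + s • v)).lo - (f x).lo) / s with hp
  set q : ℝ → ℝ := fun s => ((f (x + s • v)).hi - (f x).hi) / s with hq
  -- membership of the segment
  have hmem : ∀ s : ℝ, 0 ≤ s → s ≤ 1 → x + s • v ∈ U := by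
    intro s h0 h1
    have he : x + s • v = (1 - s) • x + s • y := by
      rw [hv]; module
    rw [he]
    exact hU hx hy (by linarith) h0 (by ring)
  -- componentwise convexity
  have hconv : ∀ a ∈ U, ∀ b ∈ U, ∀ l : ℝ, 0 ≤ l → l ≤ 1 →
      (f (l • a + (1 - l) • b)).lo ≤ l * (f a).lo + (1 - l) * (f b).lo ∧
      (f (l • a + (1 - l) • b)).hi ≤ l * (f a).hi + (1 - l) * (f b).hi := by
    intro a ha b hb l h0 h1
    have h := hf a ha b hb l ⟨h0, h1⟩
    have h10 : (0:ℝ) ≤ 1 - l := by linarith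
    simpa [IntervalR.le, IntervalR.add, IntervalR.smul, h0, h10] using h
  -- monotonicity of the quotients
  have hmono : ∀ s t : ℝ, 0 < s → s ≤ t → t ≤ 1 → p s ≤ p t ∧ q s ≤ q t := by
    intro s t hs hst ht1
    have ht : 0 < t := lt_of_lt_of_le hs hst
    have hzt : x + t • v ∈ U := hmem t ht.le ht1
    have hl0 : 0 ≤ s / t := div_nonneg hs.le ht.le
    have hl1 : s / t ≤ 1 := (div_le_one ht).2 hst
    have hlt : s / t * t = s := div_mul_cancel₀ s ht.ne'
    have hcomb : (s / t) • (x + t • v) + (1 - s / t) • x = x + s • v := by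
      rw [smul_add, smul_smul, hlt]; module
    have h := hconv (x + t • v) hzt x hx (s / t) hl0 hl1
    rw [hcomb] at h
    exact ⟨aux_quot _ _ _ _ _ _ hs ht hlt h.1, aux_quot _ _ _ _ _ _ hs ht hlt h.2⟩
  -- component form of Q on Ioi 0
  have hQlo_eq : ∀ t : ℝ, t ∈ Ioi (0:ℝ) →
      (IntervalR.smul (1 / t) (IntervalR.gH (f (x + t • v)) (f x))).lo = min (p t) (q t) := by
    intro t ht
    have ht0 : (0:ℝ) < t := ht
    have ht' : (0:ℝ) ≤ 1 / t := (one_div_pos.mpr ht0).le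
    simp only [IntervalR.smul, IntervalR.gH, dif_pos ht', hp, hq]
    rw [min_div_div_right ht0.le]
    exact one_div_mul_eq_div t _
  have hQhi_eq : ∀ t : ℝ, t ∈ Ioi (0:ℝ) →
      (IntervalR.smul (1 / t) (IntervalR.gH (f (x + t • v)) (f x))).hi = max (p t) (q t) := by
    intro t ht
    have ht0 : (0:ℝ) < t := ht
    have ht' : (0:ℝ) ≤ 1 / t := (one_div_pos.mpr ht0).le
    simp only [IntervalR.smul, IntervalR.gH, dif_pos ht', hp, hq]
    rw [max_div_div_right ht0.le]
    exact one_div_mul_eq_div t _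
  -- componentwise limits
  have hcomp : ∀ sel : IntervalR → ℝ, (sel = IntervalR.lo ∨ sel = IntervalR.hi) →
      Tendsto (fun t : ℝ =>
        sel (IntervalR.smul (1 / t) (IntervalR.gH (f (x + t • v)) (f x)))) (𝓝[>] 0) (𝓝 (sel L)) := by
    intro sel hsel
    rw [tendsto_iff_dist_tendsto_zero]
    simp only [Real.dist_eq]
    refine squeeze_zero (fun t => abs_nonneg _) (fun t => ?_) hL
    rcases hsel with h | h <;> rw [h]
    · exact le_max_left _ _
    · exact le_max_right _ _
  have hmin : Tendsto (fun t => min (p t) (q t)) (𝓝[>] (0:ℝ)) (𝓝 L.lo) := by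
    refine (hcomp IntervalR.lo (Or.inl rfl)).congr' ?_
    filter_upwards [self_mem_nhdsWithin] with t ht using hQlo_eq t ht
  have hmax : Tendsto (fun t => max (p t) (q t)) (𝓝[>] (0:ℝ)) (𝓝 L.hi) := by
    refine (hcomp IntervalR.hi (Or.inr rfl)).congr' ?_
    filter_upwards [self_mem_nhdsWithin] with t ht using hQhi_eq t ht
  -- values at 1
  have hxy : x + v = y := by rw [hv]; module
  have p1 : p 1 = (f y).lo - (f x).lo := by rw [hp]; simp [one_smul, hxy]
  have q1 : q 1 = (f y).hi - (f x).hi := by rw [hq]; simp [one_smul, hxy]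
  -- Step A : L.lo ≤ min (p t) (q t) for t ∈ Ioc 0 1
  have stepA : ∀ t : ℝ, 0 < t → t ≤ 1 → L.lo ≤ min (p t) (q t) := by
    intro t ht ht1
    refine le_of_tendsto hmin ?_
    filter_upwards [Ioo_mem_nhdsGT_of_mem (⟨le_refl 0, ht⟩ : (0:ℝ) ∈ Ico 0 t)] with s hs
    have h := hmono s t hs.1 hs.2.le ht1
    exact min_le_min h.1 h.2
  have hp1L : p 1 ≤ L.lo := by rw [p1]; linarith
  -- Step B : p t = L.lo on (0,1], and L.lo ≤ q t
  have stepB : ∀ t : ℝ, 0 < t → t ≤ 1 → p t = L.lo ∧ L.lo ≤ q t := by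
    intro t ht ht1
    have h1 : p t ≤ p 1 := (hmono t 1 ht ht1 le_rfl).1
    have h2 := stepA t ht ht1
    constructor
    · exact le_antisymm (by linarith [min_le_left (p t) (q t)]) (le_trans h2 (min_le_left _ _))
    · exact le_trans h2 (min_le_right _ _)
  -- Step D : L.hi ≤ q 1
  have stepD : L.hi ≤ q 1 := by
    refine le_of_tendsto hmax ?_
    filter_upwards [Ioo_mem_nhdsGT_of_mem (⟨le_refl 0, one_pos⟩ : (0:ℝ) ∈ Ico 0 1)] with s hs
    have hB := stepB s hs.1 hs.2.le
    have hq1 : L.lo ≤ q 1 := (stepB 1 one_pos le_rfl).2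
    exact max_le (by rw [hB.1]; exact hq1) (hmono s 1 hs.1 hs.2.le le_rfl).2
  have hq1L : q 1 ≤ L.hi := by rw [q1]; linarith
  -- conclude equality and contradiction
  have e1 : (f y).lo = L.lo + (f x).lo := by
    have := (stepB 1 one_pos le_rfl).1
    rw [p1] at this; linarith
  have e2 : (f y).hi = L.hi + (f x).hi := by
    have : q 1 = L.hi := le_antisymm hq1L stepD
    rw [q1] at this; linarith
  exact hneq (IntervalR.ext' e1 e2)
end

section
/- Let D ⊆ ℝⁿ be a nonempty open set, f: D → I(ℝ) an interval valued function, and x₀ ∈ D a point at which f is gH-directionally differentiable in every direction. (a) If x₀ is an efficient point of min_{x∈D} f(x), then for every x ∈ D, either f'(x₀, x − x₀) ⊀ [0,0] or f'(x₀, x − x₀) = [a, 0] for some a < 0. (b) If in addition D is convex, f is convex on D, and f'(x₀, x − x₀) ⊀ [0,0] for all x ∈ D, then x₀ is an efficient point of min_{x∈D} f(x). -/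
open Filter Set

lemma IntervalR.smul_lo' {l : ℝ} (hl : 0 ≤ l) (A : IntervalR) :
    (IntervalR.smul l A).lo = l * A.lo := by simp [IntervalR.smul, hl]

lemma IntervalR.smul_hi' {l : ℝ} (hl : 0 ≤ l) (A : IntervalR) :
    (IntervalR.smul l A).hi = l * A.hi := by simp [IntervalR.smul, hl]

lemma exists_good_t {n : ℕ} {f : EuclideanSpace ℝ (Fin n) → IntervalR}
    {x₀ v : EuclideanSpace ℝ (Fin n)} {L : IntervalR}
    (h : HasGHDirDeriv f x₀ v L) {D : Set (EuclideanSpace ℝ (Fin n))}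
    (hD : IsOpen D) (hx₀ : x₀ ∈ D) {ε : ℝ} (hε : 0 < ε) :
    ∃ t : ℝ, 0 < t ∧ t < 1 ∧ x₀ + t • v ∈ D ∧
      |(1/t) * min ((f (x₀ + t • v)).lo - (f x₀).lo) ((f (x₀ + t • v)).hi - (f x₀).hi) - L.lo| < ε ∧
      |(1/t) * max ((f (x₀ + t • v)).lo - (f x₀).lo) ((f (x₀ + t • v)).hi - (f x₀).hi) - L.hi| < ε := by
  obtain ⟨r, hr, hball⟩ := Metric.isOpen_iff.mp hD x₀ hx₀
  set t₀ : ℝ := min 1 (r / (‖v‖ + 1)) with ht₀def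
  have hnv : (0:ℝ) < ‖v‖ + 1 := by positivity
  have ht₀ : 0 < t₀ := lt_min one_pos (div_pos hr hnv)
  have h1 : ∀ᶠ t in nhdsWithin (0:ℝ) (Set.Ioi 0), t ∈ Set.Ioi (0:ℝ) :=
    eventually_mem_nhdsWithin
  have h2 : ∀ᶠ t in nhdsWithin (0:ℝ) (Set.Ioi 0), t < t₀ :=
    eventually_nhdsWithin_of_eventually_nhds (Filter.Tendsto.eventually_lt_const ht₀ tendsto_id)
  have h3 : ∀ᶠ t in nhdsWithin (0:ℝ) (Set.Ioi 0),
      IntervalR.dH (IntervalR.smul (1 / t) (IntervalR.gH (f (x₀ + t • v)) (f x₀))) L < ε :=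
    h.eventually (Filter.Tendsto.eventually_lt_const hε tendsto_id)
  obtain ⟨t, ⟨ht, ht'⟩, hdH⟩ := ((h1.and h2).and h3).exists
  have htpos : 0 < t := ht
  refine ⟨t, htpos, lt_of_lt_of_le ht' (min_le_left _ _), ?_, ?_, ?_⟩
  · apply hball
    rw [Metric.mem_ball, dist_eq_norm, add_sub_cancel_left, norm_smul, Real.norm_eq_abs,
      abs_of_pos htpos]
    calc t * ‖v‖ ≤ t * (‖v‖ + 1) := by nlinarith [norm_nonneg v]
      _ < t₀ * (‖v‖ + 1) := by nlinarith
      _ ≤ (r / (‖v‖ + 1)) * (‖v‖ + 1) := by nlinarith [min_le_right (1:ℝ) (r / (‖v‖ + 1))]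
      _ = r := div_mul_cancel₀ r (ne_of_gt hnv)
  · have h1t : (0:ℝ) ≤ 1/t := by positivity
    have := hdH
    rw [IntervalR.dH, IntervalR.smul_lo' h1t, IntervalR.smul_hi' h1t] at this
    exact ((max_lt_iff.mp this).1)
  · have h1t : (0:ℝ) ≤ 1/t := by positivity
    have := hdH
    rw [IntervalR.dH, IntervalR.smul_lo' h1t, IntervalR.smul_hi' h1t] at this
    exact ((max_lt_iff.mp this).2)

set_option maxHeartbeats 1600000 in
theorem efficient_point_characterization {n : ℕ} (D : Set (EuclideanSpace ℝ (Fin n)))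
    (hne : D.Nonempty) (hDo : IsOpen D)
    (f : EuclideanSpace ℝ (Fin n) → IntervalR)
    (x₀ : EuclideanSpace ℝ (Fin n)) (hx₀ : x₀ ∈ D)
    (f' : EuclideanSpace ℝ (Fin n) → IntervalR)
    (hdiff : ∀ v : EuclideanSpace ℝ (Fin n), HasGHDirDeriv f x₀ v (f' v)) :
    -- (a) necessity
    ((∀ x ∈ D, ¬ IntervalR.lt (f x) (f x₀)) →
      ∀ x ∈ D,
        ¬ IntervalR.lt (f' (x - x₀)) IntervalR.zero ∨
        ∃ a : ℝ, a < 0 ∧ (f' (x - x₀)).lo = a ∧ (f' (x - x₀)).hi = 0) ∧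
    -- (b) sufficiency under convexity
    (Convex ℝ D → ConvexIVF D f →
      (∀ x ∈ D, ¬ IntervalR.lt (f' (x - x₀)) IntervalR.zero) →
      ∀ x ∈ D, ¬ IntervalR.lt (f x) (f x₀)) := by
  constructor
  · -- (a)
    intro heff x hx
    by_cases hlt : IntervalR.lt (f' (x - x₀)) IntervalR.zero
    · right
      obtain ⟨⟨hlo, hhi⟩, hne'⟩ := hlt
      simp only [IntervalR.zero] at hlo hhi
      have hhi0 : (f' (x - x₀)).hi = 0 := by
        by_contra hne0
        have hhneg : (f' (x - x₀)).hi < 0 := lt_of_le_of_ne hhi hne0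
        obtain ⟨t, htpos, ht1, hmem, habslo, habshi⟩ :=
          exists_good_t (hdiff (x - x₀)) hDo hx₀ (ε := -(f' (x - x₀)).hi / 2) (by linarith)
        set y := x₀ + t • (x - x₀)
        have hmax : (1/t) * max ((f y).lo - (f x₀).lo) ((f y).hi - (f x₀).hi) < 0 := by
          have := abs_lt.mp habshi
          linarith [this.1, this.2]
        have h1t : (0:ℝ) < 1/t := by positivity
        have hmax' : max ((f y).lo - (f x₀).lo) ((f y).hi - (f x₀).hi) < 0 := by
          nlinarith
        have hlo' : (f y).lo < (f x₀).lo := by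
          have := le_max_left ((f y).lo - (f x₀).lo) ((f y).hi - (f x₀).hi); linarith
        have hhi' : (f y).hi < (f x₀).hi := by
          have := le_max_right ((f y).lo - (f x₀).lo) ((f y).hi - (f x₀).hi); linarith
        exact heff y hmem ⟨⟨le_of_lt hlo', le_of_lt hhi'⟩,
          fun h => absurd (congrArg IntervalR.lo h) (ne_of_lt hlo')⟩
      have hlone : (f' (x - x₀)).lo < 0 := by
        rcases lt_or_eq_of_le hlo with h | h
        · exact h
        · exfalso; apply hne'
          have := (f' (x - x₀)).lo_le_hi
          cases hL : f' (x - x₀)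
          simp_all [IntervalR.zero]
      exact ⟨(f' (x - x₀)).lo, hlone, rfl, hhi0⟩
    · left; exact hlt
  · -- (b)
    intro hconvD hconvf hnd x hx
    by_contra hcon
    obtain ⟨⟨hlo, hhi⟩, hne'⟩ := hcon
    set δlo := (f x).lo - (f x₀).lo with hδlo
    set δhi := (f x).hi - (f x₀).hi with hδhi
    have hδlo0 : δlo ≤ 0 := by simp [hδlo]; linarith
    have hδhi0 : δhi ≤ 0 := by simp [hδhi]; linarith
    have hδneg : min δlo δhi < 0 := by
      rcases lt_or_eq_of_le hlo with h | h
      · exact lt_of_le_of_lt (min_le_left _ _) (by simp [hδlo]; linarith)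
      · rcases lt_or_eq_of_le hhi with h' | h'
        · exact lt_of_le_of_lt (min_le_right _ _) (by simp [hδhi]; linarith)
        · exfalso; apply hne'
          cases hA : f x; cases hB : f x₀
          simp_all
    -- key bounds on the derivative
    have key : ∀ ε > 0, (f' (x - x₀)).lo < min δlo δhi + ε ∧
        (f' (x - x₀)).hi < max δlo δhi + ε := by
      intro ε hε
      obtain ⟨t, htpos, ht1, hmem, habslo, habshi⟩ :=
        exists_good_t (hdiff (x - x₀)) hDo hx₀ hε
      set y := x₀ + t • (x - x₀) with hy
      have hpt : t • x + (1 - t) • x₀ = y := by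
        rw [hy]; module
      have hconv := hconvf x hx x₀ hx₀ t ⟨le_of_lt htpos, le_of_lt ht1⟩
      rw [hpt] at hconv
      obtain ⟨hclo, hchi⟩ := hconv
      have ht0 : (0:ℝ) ≤ t := le_of_lt htpos
      have ht1' : (0:ℝ) ≤ 1 - t := by linarith
      simp only [IntervalR.add, IntervalR.smul_lo' ht0, IntervalR.smul_lo' ht1',
        IntervalR.smul_hi' ht0, IntervalR.smul_hi' ht1'] at hclo hchi
      have hΔlo : (f y).lo - (f x₀).lo ≤ t * δlo := by simp [hδlo]; nlinarith
      have hΔhi : (f y).hi - (f x₀).hi ≤ t * δhi := by simp [hδhi]; nlinarith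
      have h1t : (0:ℝ) < 1/t := by positivity
      have heqlo : (1/t) * (t * δlo) = δlo := by field_simp
      have heqhi : (1/t) * (t * δhi) = δhi := by field_simp
      have hminle : (1/t) * min ((f y).lo - (f x₀).lo) ((f y).hi - (f x₀).hi)
          ≤ min δlo δhi := by
        apply le_min
        · nlinarith [min_le_left ((f y).lo - (f x₀).lo) ((f y).hi - (f x₀).hi)]
        · nlinarith [min_le_right ((f y).lo - (f x₀).lo) ((f y).hi - (f x₀).hi)]
      have heqmax : (1/t) * (t * max δlo δhi) = max δlo δhi := by field_simp
      have hmaxle : (1/t) * max ((f y).lo - (f x₀).lo) ((f y).hi - (f x₀).hi)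
          ≤ max δlo δhi := by
        have h1 : (f y).lo - (f x₀).lo ≤ t * max δlo δhi := by
          nlinarith [le_max_left δlo δhi]
        have h2 : (f y).hi - (f x₀).hi ≤ t * max δlo δhi := by
          nlinarith [le_max_right δlo δhi]
        nlinarith [max_le h1 h2]
      constructor
      · have := (abs_lt.mp habslo).1; linarith
      · have := (abs_lt.mp habshi).1; linarith
    have hLlo : (f' (x - x₀)).lo ≤ min δlo δhi :=
      le_of_forall_pos_le_add (fun ε hε => le_of_lt (key ε hε).1)
    have hLhi : (f' (x - x₀)).hi ≤ max δlo δhi :=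
      le_of_forall_pos_le_add (fun ε hε => le_of_lt (key ε hε).2)
    apply hnd x hx
    refine ⟨⟨?_, ?_⟩, ?_⟩
    · show (f' (x - x₀)).lo ≤ (0:ℝ); linarith
    · show (f' (x - x₀)).hi ≤ (0:ℝ)
      calc (f' (x - x₀)).hi ≤ max δlo δhi := hLhi
        _ ≤ 0 := max_le hδlo0 hδhi0
    · intro h
      have : (f' (x - x₀)).lo = 0 := congrArg IntervalR.lo h
      linarith
end
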